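/- Error-reweighted split conformal prediction validity (Proposition 1, CP-ERC case). Let n ≥ 1, let ε > 0, and let (μ_1, s_1, Y_1), …, (μ_{n+1}, s_{n+1}, Y_{n+1}) be exchangeable random triples with values in ℝ³ on a probability space with s_i ≥ 0 almost surely for every i. Define the reweighted conformity scores V_i = |μ_i − Y_i| / (s_i + ε) for i = 1, …, n+1. Let α ∈ (0,1), set k = ⌈(n+1)(1−α)⌉, assume k ≤ n, and let d be the k-th order statistic of V_1, …, V_n. Then P( μ_{n+1} − d·(s_{n+1} + ε) ≤ Y_{n+1} and Y_{n+1} ≤ μ_{n+1} + d·(s_{n+1} + ε) ) ≥ 1 − α. -/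

import Mathlib

open MeasureTheory

/-- Exchangeability: for every permutation `σ`, the joint law of the permuted
family equals the joint law of the original family. -/
def Exchangeable {Ω E : Type*} [MeasurableSpace Ω] [MeasurableSpace E]
    (P : Measure Ω) {N : ℕ} (Z : Fin N → Ω → E) : Prop :=
  ∀ σ : Equiv.Perm (Fin N),
    Measure.map (fun ω i => Z (σ i) ω) P = Measure.map (fun ω i => Z i ω) P

/-- The `k`-th order statistic (k-th smallest value, 1-indexed, counted with
multiplicity) of the finite family `v`. -/
noncomputable def orderStat {n : ℕ} (v : Fin n → ℝ) (k : ℕ) : ℝ :=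
  (List.insertionSort (· ≤ ·) (List.ofFn v)).getD (k - 1) 0

open scoped ENNReal

lemma countP_ofFn {n : ℕ} (v : Fin n → ℝ) (p : ℝ → Prop) [DecidablePred p] :
    (List.ofFn v).countP (fun x => decide (p x)) = (Finset.univ.filter (fun i => p (v i))).card := by
  rw [List.ofFn_eq_map, List.countP_map, Fin.univ_def]
  simp [Finset.filter, Finset.card, List.countP_eq_length_filter, Function.comp]
  rfl

lemma card_filter_val_lt {n k : ℕ} (hk : k ≤ n) :
    (Finset.univ.filter (fun i : Fin n => (i : ℕ) < k)).card = k := by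
  rcases eq_or_lt_of_le hk with h | h
  · subst h
    have h2 : (Finset.univ.filter (fun i : Fin k => (i : ℕ) < k)) = Finset.univ := by
      apply Finset.filter_true_of_mem; intro i _; exact i.is_lt
    simp [h2]
  · have h2 : (Finset.univ.filter (fun i : Fin n => (i : ℕ) < k)) = Finset.Iio (⟨k, h⟩ : Fin n) := by
      ext i; simp [Fin.lt_def]
    rw [h2, Fin.card_Iio]

lemma card_filter_eq_perm {n : ℕ} (v : Fin n → ℝ) (L : List ℝ)
    (hL : L.Perm (List.ofFn v)) (p : ℝ → Prop) [DecidablePred p] :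
    (Finset.univ.filter (fun i => p (v i))).card
      = (Finset.univ.filter (fun i : Fin L.length => p (L.get i))).card := by
  rw [← countP_ofFn, ← countP_ofFn, List.ofFn_get]
  exact (hL.countP_eq _).symm

lemma orderStat_eq_get {n k : ℕ} (v : Fin n → ℝ) (L : List ℝ)
    (hLdef : L = List.insertionSort (· ≤ ·) (List.ofFn v))
    (hlen : k - 1 < L.length) :
    orderStat v k = L.get ⟨k - 1, hlen⟩ := by
  subst hLdef
  rw [orderStat, List.getD_eq_getElem _ _ hlen, List.get_eq_getElem]

section OS
variable {n k : ℕ} (v : Fin n → ℝ)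

lemma le_orderStat_of_card_lt (hk1 : 1 ≤ k) (hkn : k ≤ n) (t : ℝ)
    (h : (Finset.univ.filter (fun i => v i < t)).card < k) : t ≤ orderStat v k := by
  set L := List.insertionSort (· ≤ ·) (List.ofFn v) with hLdef
  have hperm : L.Perm (List.ofFn v) := List.perm_insertionSort _ _
  have hlen : L.length = n := by rw [hLdef, List.length_insertionSort, List.length_ofFn]
  have hsorted : L.Pairwise (· ≤ ·) := List.pairwise_insertionSort _ _
  have hk1n : k - 1 < L.length := by omega
  rw [orderStat_eq_get v L hLdef hk1n]
  by_contra hlt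
  push_neg at hlt
  have key : (Finset.univ.filter (fun i : Fin L.length => (i : ℕ) < k)).card
      ≤ (Finset.univ.filter (fun i : Fin L.length => L.get i < t)).card := by
    apply Finset.card_le_card
    intro i hi
    simp only [Finset.mem_filter, Finset.mem_univ, true_and] at hi ⊢
    have hle : L.get i ≤ L.get ⟨k - 1, hk1n⟩ := hsorted.rel_get_of_le (by simp [Fin.le_def]; omega)
    exact lt_of_le_of_lt hle hlt
  rw [card_filter_val_lt (by omega)] at key
  rw [card_filter_eq_perm v L hperm (fun x => x < t)] at h
  omega

lemma card_lt_orderStat_le (hk1 : 1 ≤ k) (hkn : k ≤ n) :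
    (Finset.univ.filter (fun i => v i < orderStat v k)).card ≤ k - 1 := by
  set L := List.insertionSort (· ≤ ·) (List.ofFn v) with hLdef
  have hperm : L.Perm (List.ofFn v) := List.perm_insertionSort _ _
  have hlen : L.length = n := by rw [hLdef, List.length_insertionSort, List.length_ofFn]
  have hsorted : L.Pairwise (· ≤ ·) := List.pairwise_insertionSort _ _
  have hk1n : k - 1 < L.length := by omega
  rw [card_filter_eq_perm v L hperm (fun x => x < orderStat v k),
    orderStat_eq_get v L hLdef hk1n]
  calc (Finset.univ.filter (fun i : Fin L.length => L.get i < L.get ⟨k - 1, hk1n⟩)).card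
      ≤ (Finset.univ.filter (fun i : Fin L.length => (i : ℕ) < k - 1)).card := by
        apply Finset.card_le_card
        intro i hi
        simp only [Finset.mem_filter, Finset.mem_univ, true_and] at hi ⊢
        by_contra hge
        push_neg at hge
        exact absurd (hsorted.rel_get_of_le (a := ⟨k - 1, hk1n⟩) (by simp [Fin.le_def]; omega))
          (not_le.mpr hi)
    _ = k - 1 := card_filter_val_lt (by omega)

lemma k_le_card_le_orderStat (hk1 : 1 ≤ k) (hkn : k ≤ n) :
    k ≤ (Finset.univ.filter (fun i => v i ≤ orderStat v k)).card := by
  set L := List.insertionSort (· ≤ ·) (List.ofFn v) with hLdef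
  have hperm : L.Perm (List.ofFn v) := List.perm_insertionSort _ _
  have hlen : L.length = n := by rw [hLdef, List.length_insertionSort, List.length_ofFn]
  have hsorted : L.Pairwise (· ≤ ·) := List.pairwise_insertionSort _ _
  have hk1n : k - 1 < L.length := by omega
  rw [card_filter_eq_perm v L hperm (fun x => x ≤ orderStat v k),
    orderStat_eq_get v L hLdef hk1n]
  calc k = (Finset.univ.filter (fun i : Fin L.length => (i : ℕ) < k)).card :=
        (card_filter_val_lt (by omega)).symm
    _ ≤ _ := by
        apply Finset.card_le_card
        intro i hi
        simp only [Finset.mem_filter, Finset.mem_univ, true_and] at hi ⊢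
        exact hsorted.rel_get_of_le (by simp [Fin.le_def]; omega)

end OS

lemma rank_lemma {m k : ℕ} (hk1 : 1 ≤ k) (hkm : k ≤ m) (w : Fin m → ℝ) :
    k ≤ (Finset.univ.filter (fun i =>
        (Finset.univ.filter (fun j => w j < w i)).card ≤ k - 1)).card := by
  refine le_trans (k_le_card_le_orderStat w hk1 hkm) (Finset.card_le_card ?_)
  intro i hi
  simp only [Finset.mem_filter, Finset.mem_univ, true_and] at hi ⊢
  refine le_trans (Finset.card_le_card ?_) (card_lt_orderStat_le w hk1 hkm)
  intro j hj
  simp only [Finset.mem_filter, Finset.mem_univ, true_and] at hj ⊢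
  exact lt_of_lt_of_le hj hi


lemma card_filter_perm {m : ℕ} (σ : Equiv.Perm (Fin m)) (q : Fin m → Prop) [DecidablePred q] :
    (Finset.univ.filter (fun j => q (σ j))).card = (Finset.univ.filter q).card := by
  apply Finset.card_bij (fun j _ => σ j)
  · intro a ha; simpa using (Finset.mem_filter.mp ha).2
  · intro a _ b _ h; exact σ.injective h
  · intro b hb
    exact ⟨σ.symm b, by simpa using (Finset.mem_filter.mp hb).2, by simp⟩

/-- Error-reweighted split conformal prediction validity
(Proposition 1, CP-ERC case). -/
theorem erc_split_conformal_prediction_validity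
    {Ω : Type*} [MeasurableSpace Ω] (P : Measure Ω) [IsProbabilityMeasure P]
    (n : ℕ) (hn : 1 ≤ n) (ε : ℝ) (hε : 0 < ε)
    (μ s Y : Fin (n + 1) → Ω → ℝ)
    (hμ : ∀ i, Measurable (μ i)) (hs : ∀ i, Measurable (s i))
    (hY : ∀ i, Measurable (Y i))
    (hs0 : ∀ i, ∀ᵐ ω ∂P, 0 ≤ s i ω)
    (hexch : Exchangeable P (fun i ω => (μ i ω, s i ω, Y i ω)))
    (V : Fin (n + 1) → Ω → ℝ)
    (hV : ∀ i ω, V i ω = |μ i ω - Y i ω| / (s i ω + ε))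
    (α : ℝ) (hα : α ∈ Set.Ioo (0 : ℝ) 1)
    (k : ℕ) (hk : k = ⌈((n : ℝ) + 1) * (1 - α)⌉₊) (hkn : k ≤ n)
    (d : Ω → ℝ)
    (hd : ∀ ω, d ω = orderStat (fun i : Fin n => V i.castSucc ω) k) :
    ENNReal.ofReal (1 - α) ≤
      P {ω | μ (Fin.last n) ω - d ω * (s (Fin.last n) ω + ε) ≤ Y (Fin.last n) ω ∧
             Y (Fin.last n) ω ≤ μ (Fin.last n) ω + d ω * (s (Fin.last n) ω + ε)} := by
  classical
  obtain ⟨hα0, hα1⟩ := hα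
  have hk1 : 1 ≤ k := by
    rw [hk]
    rw [Nat.one_le_iff_ne_zero, ← Nat.pos_iff_ne_zero, Nat.ceil_pos]
    have : (0:ℝ) < (n:ℝ) + 1 := by positivity
    nlinarith
  -- the score function and the joint random vector
  set score : ℝ × ℝ × ℝ → ℝ := fun p => |p.1 - p.2.2| / (p.2.1 + ε) with hscoredef
  have hscore : Measurable score := by
    apply Measurable.div
    · exact (measurable_fst.sub (measurable_snd.comp measurable_snd)).abs
    · exact (measurable_fst.comp measurable_snd).add measurable_const
  set Z : Fin (n + 1) → Ω → ℝ × ℝ × ℝ := fun i ω => (μ i ω, s i ω, Y i ω) with hZdef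
  have hZm : ∀ i, Measurable (Z i) := fun i => (hμ i).prod ((hs i).prod (hY i))
  have hVZ : ∀ j ω, V j ω = score (Z j ω) := fun j ω => hV j ω
  have hVm : ∀ i, Measurable (V i) := by
    intro i
    have : V i = fun ω => score (Z i ω) := funext (hVZ i)
    rw [this]
    exact hscore.comp (hZm i)
  -- the events
  set E : Fin (n + 1) → Set Ω := fun i =>
    {ω | (Finset.univ.filter fun j => V j ω < V i ω).card ≤ k - 1} with hEdef
  have hEm : ∀ i, MeasurableSet (E i) := by
    intro i
    have hf : Measurable (fun ω => (Finset.univ.filter fun j => V j ω < V i ω).card) := by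
      have : (fun ω => (Finset.univ.filter fun j => V j ω < V i ω).card)
          = fun ω => ∑ j, if V j ω < V i ω then 1 else 0 := by
        funext ω; rw [Finset.card_filter]
      rw [this]
      apply Finset.measurable_sum
      intro j _
      exact Measurable.ite (measurableSet_lt (hVm j) (hVm i)) measurable_const measurable_const
    exact hf (by trivial : MeasurableSet {m : ℕ | m ≤ k - 1})
  -- the target event on function space
  set A : Set (Fin (n + 1) → ℝ × ℝ × ℝ) :=
    {z | (Finset.univ.filter fun j => score (z j) < score (z (Fin.last n))).card ≤ k - 1}
    with hAdef
  have hAm : MeasurableSet A := by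
    have hf : Measurable (fun z : Fin (n + 1) → ℝ × ℝ × ℝ =>
        (Finset.univ.filter fun j => score (z j) < score (z (Fin.last n))).card) := by
      have : (fun z : Fin (n + 1) → ℝ × ℝ × ℝ =>
          (Finset.univ.filter fun j => score (z j) < score (z (Fin.last n))).card)
          = fun z => ∑ j, if score (z j) < score (z (Fin.last n)) then 1 else 0 := by
        funext z; rw [Finset.card_filter]
      rw [this]
      apply Finset.measurable_sum
      intro j _
      exact Measurable.ite
        (measurableSet_lt (hscore.comp (measurable_pi_apply j))
          (hscore.comp (measurable_pi_apply (Fin.last n)))) measurable_const measurable_const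
    exact hf (by trivial : MeasurableSet {m : ℕ | m ≤ k - 1})
  -- preimage identification
  have hEi_eq : ∀ i : Fin (n + 1),
      E i = (fun ω j => Z (Equiv.swap i (Fin.last n) j) ω) ⁻¹' A := by
    intro i
    ext ω
    simp only [hEdef, hAdef, Set.mem_setOf_eq, Set.mem_preimage]
    have hcast : (Finset.univ.filter (fun j =>
          score (Z ((Equiv.swap i (Fin.last n)) j) ω)
            < score (Z ((Equiv.swap i (Fin.last n)) (Fin.last n)) ω))).card
        = (Finset.univ.filter (fun j => V j ω < V i ω)).card := by
      rw [← card_filter_perm (Equiv.swap i (Fin.last n)) (fun j => V j ω < V i ω)]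
      refine congrArg Finset.card ?_
      refine Finset.filter_congr fun j _ => ?_
      rw [Equiv.swap_apply_right, hVZ, hVZ]
    rw [hcast]
  -- all events have the same probability
  have hEprob : ∀ i : Fin (n + 1), P (E i) = P (E (Fin.last n)) := by
    intro i
    have hmap : ∀ σ : Equiv.Perm (Fin (n + 1)),
        Measurable (fun ω (j : Fin (n + 1)) => Z (σ j) ω) := by
      intro σ
      exact measurable_pi_lambda _ (fun j => hZm (σ j))
    have key : Measure.map (fun ω j => Z (Equiv.swap i (Fin.last n) j) ω) P
        = Measure.map (fun ω j => Z j ω) P := hexch (Equiv.swap i (Fin.last n))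
    have key2 : Measure.map (fun ω j => Z (Equiv.swap (Fin.last n) (Fin.last n) j) ω) P
        = Measure.map (fun ω j => Z j ω) P := hexch (Equiv.swap (Fin.last n) (Fin.last n))
    rw [hEi_eq i, hEi_eq (Fin.last n)]
    rw [← Measure.map_apply (hmap _) hAm, ← Measure.map_apply (hmap _) hAm, key, key2]
  -- summing: k ≤ (n+1) * P (E last)
  have hpt : ∀ ω, (k : ℝ≥0∞) ≤ ∑ i, (E i).indicator (fun _ => (1 : ℝ≥0∞)) ω := by
    intro ω
    have h1 := rank_lemma hk1 (by omega : k ≤ n + 1) (fun i => V i ω)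
    have h2 : ∑ i, (E i).indicator (fun _ => (1 : ℝ≥0∞)) ω
        = ((Finset.univ.filter fun i => ω ∈ E i).card : ℝ≥0∞) := by
      rw [Finset.card_filter]
      push_cast
      refine Finset.sum_congr rfl fun i _ => ?_
      by_cases h : ω ∈ E i <;> simp [Set.indicator_apply, h]
    rw [h2]
    have h3 : (Finset.univ.filter fun i => ω ∈ E i) = (Finset.univ.filter fun i =>
        (Finset.univ.filter fun j => V j ω < V i ω).card ≤ k - 1) := by
      apply Finset.filter_congr
      intro i _
      simp [hEdef]
    rw [h3]
    exact_mod_cast h1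
  have hsum : (k : ℝ≥0∞) ≤ ((n + 1 : ℕ) : ℝ≥0∞) * P (E (Fin.last n)) := by
    have h1 : (k : ℝ≥0∞) ≤ ∫⁻ ω, ∑ i, (E i).indicator (fun _ => (1 : ℝ≥0∞)) ω ∂P := by
      calc (k : ℝ≥0∞) = ∫⁻ _, (k : ℝ≥0∞) ∂P := by
            rw [lintegral_const, measure_univ, mul_one]
        _ ≤ _ := lintegral_mono hpt
    have h2 : ∫⁻ ω, ∑ i, (E i).indicator (fun _ => (1 : ℝ≥0∞)) ω ∂P
        = ∑ i, P (E i) := by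
      rw [lintegral_finset_sum]
      · exact Finset.sum_congr rfl fun i _ => lintegral_indicator_one (hEm i)
      · intro i _
        exact (measurable_const.indicator (hEm i))
    have h3 : ∑ i, P (E i) = ((n + 1 : ℕ) : ℝ≥0∞) * P (E (Fin.last n)) := by
      rw [Finset.sum_congr rfl fun i _ => hEprob i, Finset.sum_const, Finset.card_univ,
        Fintype.card_fin, nsmul_eq_mul]
    rw [h2, h3] at h1
    exact h1
  -- from the count to the probability bound
  have hprob : ENNReal.ofReal (1 - α) ≤ P (E (Fin.last n)) := by
    have hc0 : ((n + 1 : ℕ) : ℝ≥0∞) ≠ 0 := by exact_mod_cast Nat.succ_ne_zero n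
    have hctop : ((n + 1 : ℕ) : ℝ≥0∞) ≠ ⊤ := ENNReal.natCast_ne_top _
    rw [← ENNReal.mul_le_mul_iff_left hc0 hctop]
    calc ENNReal.ofReal (1 - α) * ((n + 1 : ℕ) : ℝ≥0∞)
        = ENNReal.ofReal ((1 - α) * ((n + 1 : ℕ) : ℝ)) := by
          rw [ENNReal.ofReal_mul (by linarith), ENNReal.ofReal_natCast]
      _ ≤ (k : ℝ≥0∞) := by
          rw [← ENNReal.ofReal_natCast k]
          apply ENNReal.ofReal_le_ofReal
          have := Nat.le_ceil (((n : ℝ) + 1) * (1 - α))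
          rw [← hk] at this
          push_cast
          nlinarith
      _ ≤ ((n + 1 : ℕ) : ℝ≥0∞) * P (E (Fin.last n)) := hsum
      _ = P (E (Fin.last n)) * ((n + 1 : ℕ) : ℝ≥0∞) := mul_comm _ _
  -- E last is a.e. contained in the target event
  refine le_trans hprob (measure_mono_ae ?_)
  filter_upwards [hs0 (Fin.last n)] with ω h0 hE
  simp only [hEdef, Set.mem_setOf_eq] at hE
  have hcount : (Finset.univ.filter fun i : Fin n =>
      V i.castSucc ω < V (Fin.last n) ω).card < k := by
    have hle : (Finset.univ.filter fun i : Fin n =>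
        V i.castSucc ω < V (Fin.last n) ω).card
        ≤ (Finset.univ.filter fun j : Fin (n + 1) => V j ω < V (Fin.last n) ω).card := by
      apply Finset.card_le_card_of_injOn Fin.castSucc
      · intro i hi
        simp only [Finset.mem_coe, Finset.mem_filter, Finset.mem_univ, true_and] at hi ⊢
        exact hi
      · exact Fin.castSucc_injective n |>.injOn
    exact lt_of_le_of_lt (hle.trans hE) (by omega)
  have hVd : V (Fin.last n) ω ≤ d ω := by
    rw [hd]
    exact le_orderStat_of_card_lt _ hk1 hkn _ hcount
  rw [hV] at hVd
  have hpos : 0 < s (Fin.last n) ω + ε := by linarith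
  rw [div_le_iff₀ hpos] at hVd
  rw [abs_le] at hVd
  constructor <;> [linarith [hVd.2]; linarith [hVd.1]]
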